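/- Let 𝔠 and 𝔡 be braided left representable short skew multicategories and F : 𝔠 → 𝔡 a morphism of short skew multicategories. If F commutes with β³₂ (i.e. F^t_3(β³₂f) = β³₂(F^t_3 f) for all tight ternary f), then F also commutes with β⁴₂ and β⁴₃ (i.e. F^t_4(β⁴₂g) = β⁴₂(F^t_4 g) and F^t_4(β⁴₃g) = β⁴₃(F^t_4 g) for all tight 4-ary g). -/

import Mathlib

open CategoryTheory

universe v u

/-- A *short skew multicategory* structure on a category `C` (Bourke–Lobbia).
The tight unary multimaps are exactly the morphisms of `C`; there are tight
`n`-ary multimaps for `1 ≤ n ≤ 4` and loose `n`-ary multimaps for `n = 0,1,2`,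
with comparison maps `j` from tight to loose, functorial actions of tight unary
maps, and the substitution operations (tight binary into tight binary/ternary,
tight ternary into tight binary, nullary into tight binary/ternary, nullary
into loose unary, loose unary into tight binary, tight binary into loose
unary), natural in every variable except the substituted one and dinatural in
that one, subject to the associativity and interchange equations and the
naturality of `j`.  The result of a substitution is tight exactly when the
outer multimap is tight and any multimap substituted in the first position is
tight. -/
structure ShortSkewMultiStruct (C : Type u) [Category.{v} C] where
  /-- tight binary multimaps -/
  T2 : C → C → C → Type v
  /-- tight ternary multimaps -/
  T3 : C → C → C → C → Type v
  /-- tight 4-ary multimaps -/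
  T4 : C → C → C → C → C → Type v
  /-- (loose) nullary multimaps -/
  L0 : C → Type v
  /-- loose unary multimaps -/
  L1 : C → C → Type v
  /-- loose binary multimaps -/
  L2 : C → C → C → Type v
  /-- comparison of tight unary multimaps (= morphisms of `C`) into loose ones -/
  j1 : ∀ {a b : C}, (a ⟶ b) → L1 a b
  /-- comparison of tight binary multimaps into loose ones -/
  j2 : ∀ {a b c : C}, T2 a b c → L2 a b c
  mapT2 : ∀ {a1' a1 a2' a2 b b' : C},
    (a1' ⟶ a1) → (a2' ⟶ a2) → (b ⟶ b') → T2 a1 a2 b → T2 a1' a2' b'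
  mapT3 : ∀ {a1' a1 a2' a2 a3' a3 b b' : C},
    (a1' ⟶ a1) → (a2' ⟶ a2) → (a3' ⟶ a3) → (b ⟶ b') → T3 a1 a2 a3 b → T3 a1' a2' a3' b'
  mapT4 : ∀ {a1' a1 a2' a2 a3' a3 a4' a4 b b' : C},
    (a1' ⟶ a1) → (a2' ⟶ a2) → (a3' ⟶ a3) → (a4' ⟶ a4) → (b ⟶ b') →
      T4 a1 a2 a3 a4 b → T4 a1' a2' a3' a4' b'
  mapL0 : ∀ {b b' : C}, (b ⟶ b') → L0 b → L0 b'
  mapL1 : ∀ {a' a b b' : C}, (a' ⟶ a) → (b ⟶ b') → L1 a b → L1 a' b'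
  mapL2 : ∀ {a1' a1 a2' a2 b b' : C},
    (a1' ⟶ a1) → (a2' ⟶ a2) → (b ⟶ b') → L2 a1 a2 b → L2 a1' a2' b'
  mapT2_id : ∀ {a1 a2 b : C} (x : T2 a1 a2 b), mapT2 (𝟙 a1) (𝟙 a2) (𝟙 b) x = x
  mapT2_comp : ∀ {a1'' a1' a1 a2'' a2' a2 b b' b'' : C}
    (p1' : a1'' ⟶ a1') (p1 : a1' ⟶ a1) (p2' : a2'' ⟶ a2') (p2 : a2' ⟶ a2)
    (q : b ⟶ b') (q' : b' ⟶ b'') (x : T2 a1 a2 b),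
    mapT2 p1' p2' q' (mapT2 p1 p2 q x) = mapT2 (p1' ≫ p1) (p2' ≫ p2) (q ≫ q') x
  mapT3_id : ∀ {a1 a2 a3 b : C} (x : T3 a1 a2 a3 b),
    mapT3 (𝟙 a1) (𝟙 a2) (𝟙 a3) (𝟙 b) x = x
  mapT3_comp : ∀ {a1'' a1' a1 a2'' a2' a2 a3'' a3' a3 b b' b'' : C}
    (p1' : a1'' ⟶ a1') (p1 : a1' ⟶ a1) (p2' : a2'' ⟶ a2') (p2 : a2' ⟶ a2)
    (p3' : a3'' ⟶ a3') (p3 : a3' ⟶ a3) (q : b ⟶ b') (q' : b' ⟶ b'') (x : T3 a1 a2 a3 b),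
    mapT3 p1' p2' p3' q' (mapT3 p1 p2 p3 q x)
      = mapT3 (p1' ≫ p1) (p2' ≫ p2) (p3' ≫ p3) (q ≫ q') x
  mapT4_id : ∀ {a1 a2 a3 a4 b : C} (x : T4 a1 a2 a3 a4 b),
    mapT4 (𝟙 a1) (𝟙 a2) (𝟙 a3) (𝟙 a4) (𝟙 b) x = x
  mapT4_comp : ∀ {a1'' a1' a1 a2'' a2' a2 a3'' a3' a3 a4'' a4' a4 b b' b'' : C}
    (p1' : a1'' ⟶ a1') (p1 : a1' ⟶ a1) (p2' : a2'' ⟶ a2') (p2 : a2' ⟶ a2)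
    (p3' : a3'' ⟶ a3') (p3 : a3' ⟶ a3) (p4' : a4'' ⟶ a4') (p4 : a4' ⟶ a4)
    (q : b ⟶ b') (q' : b' ⟶ b'') (x : T4 a1 a2 a3 a4 b),
    mapT4 p1' p2' p3' p4' q' (mapT4 p1 p2 p3 p4 q x)
      = mapT4 (p1' ≫ p1) (p2' ≫ p2) (p3' ≫ p3) (p4' ≫ p4) (q ≫ q') x
  mapL0_id : ∀ {b : C} (x : L0 b), mapL0 (𝟙 b) x = x
  mapL0_comp : ∀ {b b' b'' : C} (q : b ⟶ b') (q' : b' ⟶ b'') (x : L0 b),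
    mapL0 q' (mapL0 q x) = mapL0 (q ≫ q') x
  mapL1_id : ∀ {a b : C} (x : L1 a b), mapL1 (𝟙 a) (𝟙 b) x = x
  mapL1_comp : ∀ {a'' a' a b b' b'' : C} (p' : a'' ⟶ a') (p : a' ⟶ a)
    (q : b ⟶ b') (q' : b' ⟶ b'') (x : L1 a b),
    mapL1 p' q' (mapL1 p q x) = mapL1 (p' ≫ p) (q ≫ q') x
  mapL2_id : ∀ {a1 a2 b : C} (x : L2 a1 a2 b), mapL2 (𝟙 a1) (𝟙 a2) (𝟙 b) x = x
  mapL2_comp : ∀ {a1'' a1' a1 a2'' a2' a2 b b' b'' : C}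
    (p1' : a1'' ⟶ a1') (p1 : a1' ⟶ a1) (p2' : a2'' ⟶ a2') (p2 : a2' ⟶ a2)
    (q : b ⟶ b') (q' : b' ⟶ b'') (x : L2 a1 a2 b),
    mapL2 p1' p2' q' (mapL2 p1 p2 q x) = mapL2 (p1' ≫ p1) (p2' ≫ p2) (q ≫ q') x
  j1_nat : ∀ {a' a b b' : C} (q : a' ⟶ a) (p : a ⟶ b) (r : b ⟶ b'),
    j1 (q ≫ p ≫ r) = mapL1 q r (j1 p)
  j2_nat : ∀ {a1' a1 a2' a2 b b' : C} (p1 : a1' ⟶ a1) (p2 : a2' ⟶ a2) (q : b ⟶ b')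
    (x : T2 a1 a2 b), j2 (mapT2 p1 p2 q x) = mapL2 p1 p2 q (j2 x)
  /-- substitution of a tight binary into the 1st variable of a tight binary -/
  tt22_1 : ∀ {b1 b2 c a1 a2 : C}, T2 b1 b2 c → T2 a1 a2 b1 → T3 a1 a2 b2 c
  tt22_2 : ∀ {b1 b2 c a1 a2 : C}, T2 b1 b2 c → T2 a1 a2 b2 → T3 b1 a1 a2 c
  /-- substitution of a tight binary into a tight ternary -/
  tt32_1 : ∀ {b1 b2 b3 c a1 a2 : C}, T3 b1 b2 b3 c → T2 a1 a2 b1 → T4 a1 a2 b2 b3 c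
  tt32_2 : ∀ {b1 b2 b3 c a1 a2 : C}, T3 b1 b2 b3 c → T2 a1 a2 b2 → T4 b1 a1 a2 b3 c
  tt32_3 : ∀ {b1 b2 b3 c a1 a2 : C}, T3 b1 b2 b3 c → T2 a1 a2 b3 → T4 b1 b2 a1 a2 c
  /-- substitution of a tight ternary into a tight binary -/
  tt23_1 : ∀ {b1 b2 c a1 a2 a3 : C}, T2 b1 b2 c → T3 a1 a2 a3 b1 → T4 a1 a2 a3 b2 c
  tt23_2 : ∀ {b1 b2 c a1 a2 a3 : C}, T2 b1 b2 c → T3 a1 a2 a3 b2 → T4 b1 a1 a2 a3 c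
  /-- substitution of a nullary into the 1st variable of a tight binary
  (the result is a loose unary map) -/
  s20_1 : ∀ {b1 b2 c : C}, T2 b1 b2 c → L0 b1 → L1 b2 c
  /-- substitution of a nullary into the 2nd variable of a tight binary
  (the result is a tight unary map, i.e. a morphism of `C`) -/
  s20_2 : ∀ {b1 b2 c : C}, T2 b1 b2 c → L0 b2 → (b1 ⟶ c)
  /-- substitution of a nullary into a tight ternary -/
  s30_1 : ∀ {b1 b2 b3 c : C}, T3 b1 b2 b3 c → L0 b1 → L2 b2 b3 c
  s30_2 : ∀ {b1 b2 b3 c : C}, T3 b1 b2 b3 c → L0 b2 → T2 b1 b3 c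
  s30_3 : ∀ {b1 b2 b3 c : C}, T3 b1 b2 b3 c → L0 b3 → T2 b1 b2 c
  /-- substitution of a nullary into a loose unary -/
  sL10 : ∀ {b c : C}, L1 b c → L0 b → L0 c
  /-- substitution of a loose unary into the 1st variable of a tight binary -/
  sl21_1 : ∀ {b1 b2 c a : C}, T2 b1 b2 c → L1 a b1 → L2 a b2 c
  /-- substitution of a loose unary into the 2nd variable of a tight binary -/
  sl21_2 : ∀ {b1 b2 c a : C}, T2 b1 b2 c → L1 a b2 → T2 b1 a c
  /-- substitution of a tight binary into a loose unary -/
  sl12 : ∀ {b c a1 a2 : C}, L1 b c → T2 a1 a2 b → L2 a1 a2 c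
  -- naturality and dinaturality of the substitutions
  tt22_1_nat : ∀ {a1' a1 a2' a2 b1 b2' b2 c c' : C} (p1 : a1' ⟶ a1) (p2 : a2' ⟶ a2)
    (q : b2' ⟶ b2) (r : c ⟶ c') (g : T2 b1 b2 c) (f : T2 a1 a2 b1),
    mapT3 p1 p2 q r (tt22_1 g f) = tt22_1 (mapT2 (𝟙 b1) q r g) (mapT2 p1 p2 (𝟙 b1) f)
  tt22_1_dinat : ∀ {a1 a2 b1 b1' b2 c : C} (h : b1 ⟶ b1') (g : T2 b1' b2 c)
    (f : T2 a1 a2 b1),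
    tt22_1 (mapT2 h (𝟙 b2) (𝟙 c) g) f = tt22_1 g (mapT2 (𝟙 a1) (𝟙 a2) h f)
  tt22_2_nat : ∀ {a1' a1 a2' a2 b1' b1 b2 c c' : C} (p1 : a1' ⟶ a1) (p2 : a2' ⟶ a2)
    (q : b1' ⟶ b1) (r : c ⟶ c') (g : T2 b1 b2 c) (f : T2 a1 a2 b2),
    mapT3 q p1 p2 r (tt22_2 g f) = tt22_2 (mapT2 q (𝟙 b2) r g) (mapT2 p1 p2 (𝟙 b2) f)
  tt22_2_dinat : ∀ {a1 a2 b1 b2 b2' c : C} (h : b2 ⟶ b2') (g : T2 b1 b2' c)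
    (f : T2 a1 a2 b2),
    tt22_2 (mapT2 (𝟙 b1) h (𝟙 c) g) f = tt22_2 g (mapT2 (𝟙 a1) (𝟙 a2) h f)
  tt32_1_nat : ∀ {a1' a1 a2' a2 b1 b2' b2 b3' b3 c c' : C} (p1 : a1' ⟶ a1)
    (p2 : a2' ⟶ a2) (q2 : b2' ⟶ b2) (q3 : b3' ⟶ b3) (r : c ⟶ c')
    (g : T3 b1 b2 b3 c) (f : T2 a1 a2 b1),
    mapT4 p1 p2 q2 q3 r (tt32_1 g f)
      = tt32_1 (mapT3 (𝟙 b1) q2 q3 r g) (mapT2 p1 p2 (𝟙 b1) f)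
  tt32_1_dinat : ∀ {a1 a2 b1 b1' b2 b3 c : C} (h : b1 ⟶ b1') (g : T3 b1' b2 b3 c)
    (f : T2 a1 a2 b1),
    tt32_1 (mapT3 h (𝟙 b2) (𝟙 b3) (𝟙 c) g) f = tt32_1 g (mapT2 (𝟙 a1) (𝟙 a2) h f)
  tt32_2_nat : ∀ {a1' a1 a2' a2 b1' b1 b2 b3' b3 c c' : C} (p1 : a1' ⟶ a1)
    (p2 : a2' ⟶ a2) (q1 : b1' ⟶ b1) (q3 : b3' ⟶ b3) (r : c ⟶ c')
    (g : T3 b1 b2 b3 c) (f : T2 a1 a2 b2),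
    mapT4 q1 p1 p2 q3 r (tt32_2 g f)
      = tt32_2 (mapT3 q1 (𝟙 b2) q3 r g) (mapT2 p1 p2 (𝟙 b2) f)
  tt32_2_dinat : ∀ {a1 a2 b1 b2 b2' b3 c : C} (h : b2 ⟶ b2') (g : T3 b1 b2' b3 c)
    (f : T2 a1 a2 b2),
    tt32_2 (mapT3 (𝟙 b1) h (𝟙 b3) (𝟙 c) g) f = tt32_2 g (mapT2 (𝟙 a1) (𝟙 a2) h f)
  tt32_3_nat : ∀ {a1' a1 a2' a2 b1' b1 b2' b2 b3 c c' : C} (p1 : a1' ⟶ a1)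
    (p2 : a2' ⟶ a2) (q1 : b1' ⟶ b1) (q2 : b2' ⟶ b2) (r : c ⟶ c')
    (g : T3 b1 b2 b3 c) (f : T2 a1 a2 b3),
    mapT4 q1 q2 p1 p2 r (tt32_3 g f)
      = tt32_3 (mapT3 q1 q2 (𝟙 b3) r g) (mapT2 p1 p2 (𝟙 b3) f)
  tt32_3_dinat : ∀ {a1 a2 b1 b2 b3 b3' c : C} (h : b3 ⟶ b3') (g : T3 b1 b2 b3' c)
    (f : T2 a1 a2 b3),
    tt32_3 (mapT3 (𝟙 b1) (𝟙 b2) h (𝟙 c) g) f = tt32_3 g (mapT2 (𝟙 a1) (𝟙 a2) h f)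
  tt23_1_nat : ∀ {a1' a1 a2' a2 a3' a3 b1 b2' b2 c c' : C}
    (p1 : a1' ⟶ a1) (p2 : a2' ⟶ a2) (p3 : a3' ⟶ a3) (q : b2' ⟶ b2) (r : c ⟶ c')
    (g : T2 b1 b2 c) (f : T3 a1 a2 a3 b1),
    mapT4 p1 p2 p3 q r (tt23_1 g f)
      = tt23_1 (mapT2 (𝟙 b1) q r g) (mapT3 p1 p2 p3 (𝟙 b1) f)
  tt23_1_dinat : ∀ {a1 a2 a3 b1 b1' b2 c : C} (h : b1 ⟶ b1') (g : T2 b1' b2 c)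
    (f : T3 a1 a2 a3 b1),
    tt23_1 (mapT2 h (𝟙 b2) (𝟙 c) g) f = tt23_1 g (mapT3 (𝟙 a1) (𝟙 a2) (𝟙 a3) h f)
  tt23_2_nat : ∀ {a1' a1 a2' a2 a3' a3 b1' b1 b2 c c' : C}
    (p1 : a1' ⟶ a1) (p2 : a2' ⟶ a2) (p3 : a3' ⟶ a3) (q : b1' ⟶ b1) (r : c ⟶ c')
    (g : T2 b1 b2 c) (f : T3 a1 a2 a3 b2),
    mapT4 q p1 p2 p3 r (tt23_2 g f)
      = tt23_2 (mapT2 q (𝟙 b2) r g) (mapT3 p1 p2 p3 (𝟙 b2) f)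
  tt23_2_dinat : ∀ {a1 a2 a3 b1 b2 b2' c : C} (h : b2 ⟶ b2') (g : T2 b1 b2' c)
    (f : T3 a1 a2 a3 b2),
    tt23_2 (mapT2 (𝟙 b1) h (𝟙 c) g) f = tt23_2 g (mapT3 (𝟙 a1) (𝟙 a2) (𝟙 a3) h f)
  s20_1_nat : ∀ {b1 b2' b2 c c' : C} (q : b2' ⟶ b2) (r : c ⟶ c')
    (g : T2 b1 b2 c) (u : L0 b1),
    mapL1 q r (s20_1 g u) = s20_1 (mapT2 (𝟙 b1) q r g) u
  s20_1_dinat : ∀ {b1 b1' b2 c : C} (h : b1 ⟶ b1') (g : T2 b1' b2 c) (u : L0 b1),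
    s20_1 (mapT2 h (𝟙 b2) (𝟙 c) g) u = s20_1 g (mapL0 h u)
  s20_2_nat : ∀ {b1' b1 b2 c c' : C} (q : b1' ⟶ b1) (r : c ⟶ c')
    (g : T2 b1 b2 c) (u : L0 b2),
    q ≫ s20_2 g u ≫ r = s20_2 (mapT2 q (𝟙 b2) r g) u
  s20_2_dinat : ∀ {b1 b2 b2' c : C} (h : b2 ⟶ b2') (g : T2 b1 b2' c) (u : L0 b2),
    s20_2 (mapT2 (𝟙 b1) h (𝟙 c) g) u = s20_2 g (mapL0 h u)
  s30_1_nat : ∀ {b1 b2' b2 b3' b3 c c' : C} (q2 : b2' ⟶ b2) (q3 : b3' ⟶ b3)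
    (r : c ⟶ c') (g : T3 b1 b2 b3 c) (u : L0 b1),
    mapL2 q2 q3 r (s30_1 g u) = s30_1 (mapT3 (𝟙 b1) q2 q3 r g) u
  s30_1_dinat : ∀ {b1 b1' b2 b3 c : C} (h : b1 ⟶ b1') (g : T3 b1' b2 b3 c) (u : L0 b1),
    s30_1 (mapT3 h (𝟙 b2) (𝟙 b3) (𝟙 c) g) u = s30_1 g (mapL0 h u)
  s30_2_nat : ∀ {b1' b1 b2 b3' b3 c c' : C} (q1 : b1' ⟶ b1) (q3 : b3' ⟶ b3)
    (r : c ⟶ c') (g : T3 b1 b2 b3 c) (u : L0 b2),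
    mapT2 q1 q3 r (s30_2 g u) = s30_2 (mapT3 q1 (𝟙 b2) q3 r g) u
  s30_2_dinat : ∀ {b1 b2 b2' b3 c : C} (h : b2 ⟶ b2') (g : T3 b1 b2' b3 c) (u : L0 b2),
    s30_2 (mapT3 (𝟙 b1) h (𝟙 b3) (𝟙 c) g) u = s30_2 g (mapL0 h u)
  s30_3_nat : ∀ {b1' b1 b2' b2 b3 c c' : C} (q1 : b1' ⟶ b1) (q2 : b2' ⟶ b2)
    (r : c ⟶ c') (g : T3 b1 b2 b3 c) (u : L0 b3),
    mapT2 q1 q2 r (s30_3 g u) = s30_3 (mapT3 q1 q2 (𝟙 b3) r g) u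
  s30_3_dinat : ∀ {b1 b2 b3 b3' c : C} (h : b3 ⟶ b3') (g : T3 b1 b2 b3' c) (u : L0 b3),
    s30_3 (mapT3 (𝟙 b1) (𝟙 b2) h (𝟙 c) g) u = s30_3 g (mapL0 h u)
  sL10_nat : ∀ {b c c' : C} (r : c ⟶ c') (q : L1 b c) (v : L0 b),
    mapL0 r (sL10 q v) = sL10 (mapL1 (𝟙 b) r q) v
  sL10_dinat : ∀ {b b' c : C} (h : b ⟶ b') (q : L1 b' c) (v : L0 b),
    sL10 (mapL1 h (𝟙 c) q) v = sL10 q (mapL0 h v)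
  sl21_1_nat : ∀ {a' a b1 b2' b2 c c' : C} (pa : a' ⟶ a) (q : b2' ⟶ b2) (r : c ⟶ c')
    (g : T2 b1 b2 c) (p : L1 a b1),
    mapL2 pa q r (sl21_1 g p) = sl21_1 (mapT2 (𝟙 b1) q r g) (mapL1 pa (𝟙 b1) p)
  sl21_1_dinat : ∀ {a b1 b1' b2 c : C} (h : b1 ⟶ b1') (g : T2 b1' b2 c) (p : L1 a b1),
    sl21_1 (mapT2 h (𝟙 b2) (𝟙 c) g) p = sl21_1 g (mapL1 (𝟙 a) h p)
  sl21_2_nat : ∀ {a' a b1' b1 b2 c c' : C} (pa : a' ⟶ a) (q : b1' ⟶ b1) (r : c ⟶ c')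
    (g : T2 b1 b2 c) (p : L1 a b2),
    mapT2 q pa r (sl21_2 g p) = sl21_2 (mapT2 q (𝟙 b2) r g) (mapL1 pa (𝟙 b2) p)
  sl21_2_dinat : ∀ {a b1 b2 b2' c : C} (h : b2 ⟶ b2') (g : T2 b1 b2' c) (p : L1 a b2),
    sl21_2 (mapT2 (𝟙 b1) h (𝟙 c) g) p = sl21_2 g (mapL1 (𝟙 a) h p)
  sl12_nat : ∀ {a1' a1 a2' a2 b c c' : C} (p1 : a1' ⟶ a1) (p2 : a2' ⟶ a2) (r : c ⟶ c')
    (q : L1 b c) (g : T2 a1 a2 b),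
    mapL2 p1 p2 r (sl12 q g) = sl12 (mapL1 (𝟙 b) r q) (mapT2 p1 p2 (𝟙 b) g)
  sl12_dinat : ∀ {a1 a2 b b' c : C} (h : b ⟶ b') (q : L1 b' c) (g : T2 a1 a2 b),
    sl12 (mapL1 h (𝟙 c) q) g = sl12 q (mapT2 (𝟙 a1) (𝟙 a2) h g)
  -- compatibility of `j` with substitutions
  j_sl21_1 : ∀ {a b1 b2 c : C} (g : T2 b1 b2 c) (p : a ⟶ b1),
    sl21_1 g (j1 p) = j2 (mapT2 p (𝟙 b2) (𝟙 c) g)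
  j_sl21_2 : ∀ {a b1 b2 c : C} (g : T2 b1 b2 c) (p : a ⟶ b2),
    sl21_2 g (j1 p) = mapT2 (𝟙 b1) p (𝟙 c) g
  j_sl12 : ∀ {a1 a2 b c : C} (p : b ⟶ c) (g : T2 a1 a2 b),
    sl12 (j1 p) g = j2 (mapT2 (𝟙 a1) (𝟙 a2) p g)
  j_sL10 : ∀ {b c : C} (p : b ⟶ c) (v : L0 b),
    sL10 (j1 p) v = mapL0 p v
  -- associativity equations (`f`, `g` tight binary)
  assoc_a_11 : ∀ {x1 x2 c b1 b2 a1 a2 : C} (f : T2 x1 x2 c) (g : T2 b1 b2 x1)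
    (h : T2 a1 a2 b1), tt23_1 f (tt22_1 g h) = tt32_1 (tt22_1 f g) h
  assoc_a_12 : ∀ {x1 x2 c b1 b2 a1 a2 : C} (f : T2 x1 x2 c) (g : T2 b1 b2 x1)
    (h : T2 a1 a2 b2), tt23_1 f (tt22_2 g h) = tt32_2 (tt22_1 f g) h
  assoc_a_21 : ∀ {x1 x2 c b1 b2 a1 a2 : C} (f : T2 x1 x2 c) (g : T2 b1 b2 x2)
    (h : T2 a1 a2 b1), tt23_2 f (tt22_1 g h) = tt32_2 (tt22_2 f g) h
  assoc_a_22 : ∀ {x1 x2 c b1 b2 a1 a2 : C} (f : T2 x1 x2 c) (g : T2 b1 b2 x2)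
    (h : T2 a1 a2 b2), tt23_2 f (tt22_2 g h) = tt32_3 (tt22_2 f g) h
  assoc_b_11 : ∀ {x1 x2 c b1 b2 : C} (f : T2 x1 x2 c) (g : T2 b1 b2 x1) (u : L0 b1),
    sl21_1 f (s20_1 g u) = s30_1 (tt22_1 f g) u
  assoc_b_12 : ∀ {x1 x2 c b1 b2 : C} (f : T2 x1 x2 c) (g : T2 b1 b2 x1) (u : L0 b2),
    mapT2 (s20_2 g u) (𝟙 x2) (𝟙 c) f = s30_2 (tt22_1 f g) u
  assoc_b_21 : ∀ {x1 x2 c b1 b2 : C} (f : T2 x1 x2 c) (g : T2 b1 b2 x2) (u : L0 b1),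
    sl21_2 f (s20_1 g u) = s30_2 (tt22_2 f g) u
  assoc_b_22 : ∀ {x1 x2 c b1 b2 : C} (f : T2 x1 x2 c) (g : T2 b1 b2 x2) (u : L0 b2),
    mapT2 (𝟙 x1) (s20_2 g u) (𝟙 c) f = s30_3 (tt22_2 f g) u
  -- interchange equations
  inter_a : ∀ {x1 x2 c a1 a2 b1 b2 : C} (f : T2 x1 x2 c) (g : T2 a1 a2 x1)
    (h : T2 b1 b2 x2), tt32_3 (tt22_1 f g) h = tt32_1 (tt22_2 f h) g
  inter_b : ∀ {x1 x2 c a1 a2 : C} (f : T2 x1 x2 c) (g : T2 a1 a2 x1) (u : L0 x2),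
    s30_3 (tt22_1 f g) u = mapT2 (𝟙 a1) (𝟙 a2) (s20_2 f u) g
  inter_c : ∀ {x1 x2 c b1 b2 : C} (f : T2 x1 x2 c) (h : T2 b1 b2 x2) (u : L0 x1),
    sl12 (s20_1 f u) h = s30_1 (tt22_2 f h) u
  inter_d : ∀ {x1 x2 c : C} (f : T2 x1 x2 c) (u : L0 x1) (v : L0 x2),
    sL10 (s20_1 f u) v = mapL0 (s20_2 f v) u

namespace ShortSkewMultiStruct

variable {C : Type u} [Category.{v} C] (S : ShortSkewMultiStruct C)

/-- `θ ∈ 𝔠₂ᵗ(a,b; t)` is a tight binary map classifier. -/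
def IsBinClassifier {a b t : C} (θ : S.T2 a b t) : Prop :=
  ∀ c : C, Function.Bijective (fun p : t ⟶ c => S.mapT2 (𝟙 a) (𝟙 b) p θ)

/-- A tight binary map classifier is left universal if substitution into the
first variable of tight binary and ternary multimaps is also bijective. -/
def IsLeftUniversalBin {a b t : C} (θ : S.T2 a b t) : Prop :=
  S.IsBinClassifier θ ∧
  (∀ x d : C, Function.Bijective (fun g : S.T2 t x d => S.tt22_1 g θ)) ∧
  (∀ x y d : C, Function.Bijective (fun g : S.T3 t x y d => S.tt32_1 g θ))

/-- `u ∈ 𝔠₀ˡ(; i)` is a nullary map classifier: substitution of `u` into tight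
unary maps gives a bijection onto nullary maps. -/
def IsNulClassifier {i : C} (u : S.L0 i) : Prop :=
  ∀ d : C, Function.Bijective (fun p : i ⟶ d => S.mapL0 p u)

/-- A nullary map classifier is left universal if the substitutions
`𝔠ᵗ_{1+n}(i,x̄;d) → 𝔠ˡ_n(x̄;d)` are also bijective for `n = 1, 2`. -/
def IsLeftUniversalNul {i : C} (u : S.L0 i) : Prop :=
  S.IsNulClassifier u ∧
  (∀ x d : C, Function.Bijective (fun g : S.T2 i x d => S.s20_1 g u)) ∧
  (∀ x y d : C, Function.Bijective (fun g : S.T3 i x y d => S.s30_1 g u))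

/-- A short skew multicategory is *left representable* if it admits left
universal nullary and tight binary map classifiers. -/
def LeftRepresentable : Prop :=
  (∀ a b : C, ∃ (t : C) (θ : S.T2 a b t), S.IsLeftUniversalBin θ) ∧
  (∃ (i : C) (u : S.L0 i), S.IsLeftUniversalNul u)

/-- `e ∈ 𝔠₂ᵗ([b,c], b; c)` exhibits `h = [b,c]` as an internal hom of a short
skew multicategory: substitution into the first variable of `e` induces
bijections `𝔠ᵗₙ(x̄;[b,c]) ≅ 𝔠ᵗₙ₊₁(x̄,b;c)` for `n = 1,2,3` and
`𝔠ˡₙ(x̄;[b,c]) ≅ 𝔠ˡₙ₊₁(x̄,b;c)` for `n = 0,1`. -/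
def IsHomObj {b c h : C} (e : S.T2 h b c) : Prop :=
  (∀ x : C, Function.Bijective (fun p : x ⟶ h => S.mapT2 p (𝟙 b) (𝟙 c) e)) ∧
  (∀ x y : C, Function.Bijective (fun g : S.T2 x y h => S.tt22_1 e g)) ∧
  (∀ x y z : C, Function.Bijective (fun g : S.T3 x y z h => S.tt23_1 e g)) ∧
  Function.Bijective (fun v : S.L0 h => S.s20_1 e v) ∧
  (∀ x : C, Function.Bijective (fun q : S.L1 x h => S.sl21_1 e q))

/-- A short skew multicategory is *closed* when every pair of objects admits
an internal hom. -/
def Closed : Prop := ∀ b c : C, ∃ (h : C) (e : S.T2 h b c), S.IsHomObj e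

end ShortSkewMultiStruct

/-- A bundled short skew multicategory. -/
structure ShortSkewMulticat : Type (max (u + 1) (v + 1)) where
  C : Type u
  [inst : Category.{v} C]
  S : ShortSkewMultiStruct C

attribute [instance] ShortSkewMulticat.inst

/-- A morphism of short skew multicategories: a functor together with natural
families on tight (`1 ≤ i ≤ 4`) and loose (`0 ≤ i ≤ 2`) multimaps commuting
with all substitutions and with the comparisons `j`. -/
structure ShortSkewMultiHom (X Y : ShortSkewMulticat.{u, v}) : Type (max u v) where
  F : X.C ⥤ Y.C
  Ft2 : ∀ {a1 a2 b : X.C}, X.S.T2 a1 a2 b → Y.S.T2 (F.obj a1) (F.obj a2) (F.obj b)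
  Ft3 : ∀ {a1 a2 a3 b : X.C},
    X.S.T3 a1 a2 a3 b → Y.S.T3 (F.obj a1) (F.obj a2) (F.obj a3) (F.obj b)
  Ft4 : ∀ {a1 a2 a3 a4 b : X.C},
    X.S.T4 a1 a2 a3 a4 b → Y.S.T4 (F.obj a1) (F.obj a2) (F.obj a3) (F.obj a4) (F.obj b)
  Fl0 : ∀ {b : X.C}, X.S.L0 b → Y.S.L0 (F.obj b)
  Fl1 : ∀ {a b : X.C}, X.S.L1 a b → Y.S.L1 (F.obj a) (F.obj b)
  Fl2 : ∀ {a1 a2 b : X.C}, X.S.L2 a1 a2 b → Y.S.L2 (F.obj a1) (F.obj a2) (F.obj b)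
  Ft2_nat : ∀ {a1' a1 a2' a2 b b' : X.C} (p1 : a1' ⟶ a1) (p2 : a2' ⟶ a2) (q : b ⟶ b')
    (x : X.S.T2 a1 a2 b),
    Ft2 (X.S.mapT2 p1 p2 q x) = Y.S.mapT2 (F.map p1) (F.map p2) (F.map q) (Ft2 x)
  Ft3_nat : ∀ {a1' a1 a2' a2 a3' a3 b b' : X.C} (p1 : a1' ⟶ a1) (p2 : a2' ⟶ a2)
    (p3 : a3' ⟶ a3) (q : b ⟶ b') (x : X.S.T3 a1 a2 a3 b),
    Ft3 (X.S.mapT3 p1 p2 p3 q x)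
      = Y.S.mapT3 (F.map p1) (F.map p2) (F.map p3) (F.map q) (Ft3 x)
  Ft4_nat : ∀ {a1' a1 a2' a2 a3' a3 a4' a4 b b' : X.C} (p1 : a1' ⟶ a1) (p2 : a2' ⟶ a2)
    (p3 : a3' ⟶ a3) (p4 : a4' ⟶ a4) (q : b ⟶ b') (x : X.S.T4 a1 a2 a3 a4 b),
    Ft4 (X.S.mapT4 p1 p2 p3 p4 q x)
      = Y.S.mapT4 (F.map p1) (F.map p2) (F.map p3) (F.map p4) (F.map q) (Ft4 x)
  Fl0_nat : ∀ {b b' : X.C} (q : b ⟶ b') (x : X.S.L0 b),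
    Fl0 (X.S.mapL0 q x) = Y.S.mapL0 (F.map q) (Fl0 x)
  Fl1_nat : ∀ {a' a b b' : X.C} (p : a' ⟶ a) (q : b ⟶ b') (x : X.S.L1 a b),
    Fl1 (X.S.mapL1 p q x) = Y.S.mapL1 (F.map p) (F.map q) (Fl1 x)
  Fl2_nat : ∀ {a1' a1 a2' a2 b b' : X.C} (p1 : a1' ⟶ a1) (p2 : a2' ⟶ a2) (q : b ⟶ b')
    (x : X.S.L2 a1 a2 b),
    Fl2 (X.S.mapL2 p1 p2 q x) = Y.S.mapL2 (F.map p1) (F.map p2) (F.map q) (Fl2 x)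
  comm_j1 : ∀ {a b : X.C} (p : a ⟶ b), Fl1 (X.S.j1 p) = Y.S.j1 (F.map p)
  comm_j2 : ∀ {a b c : X.C} (x : X.S.T2 a b c), Fl2 (X.S.j2 x) = Y.S.j2 (Ft2 x)
  comm_tt22_1 : ∀ {b1 b2 c a1 a2 : X.C} (g : X.S.T2 b1 b2 c) (f : X.S.T2 a1 a2 b1),
    Ft3 (X.S.tt22_1 g f) = Y.S.tt22_1 (Ft2 g) (Ft2 f)
  comm_tt22_2 : ∀ {b1 b2 c a1 a2 : X.C} (g : X.S.T2 b1 b2 c) (f : X.S.T2 a1 a2 b2),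
    Ft3 (X.S.tt22_2 g f) = Y.S.tt22_2 (Ft2 g) (Ft2 f)
  comm_tt32_1 : ∀ {b1 b2 b3 c a1 a2 : X.C} (g : X.S.T3 b1 b2 b3 c) (f : X.S.T2 a1 a2 b1),
    Ft4 (X.S.tt32_1 g f) = Y.S.tt32_1 (Ft3 g) (Ft2 f)
  comm_tt32_2 : ∀ {b1 b2 b3 c a1 a2 : X.C} (g : X.S.T3 b1 b2 b3 c) (f : X.S.T2 a1 a2 b2),
    Ft4 (X.S.tt32_2 g f) = Y.S.tt32_2 (Ft3 g) (Ft2 f)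
  comm_tt32_3 : ∀ {b1 b2 b3 c a1 a2 : X.C} (g : X.S.T3 b1 b2 b3 c) (f : X.S.T2 a1 a2 b3),
    Ft4 (X.S.tt32_3 g f) = Y.S.tt32_3 (Ft3 g) (Ft2 f)
  comm_tt23_1 : ∀ {b1 b2 c a1 a2 a3 : X.C} (g : X.S.T2 b1 b2 c) (f : X.S.T3 a1 a2 a3 b1),
    Ft4 (X.S.tt23_1 g f) = Y.S.tt23_1 (Ft2 g) (Ft3 f)
  comm_tt23_2 : ∀ {b1 b2 c a1 a2 a3 : X.C} (g : X.S.T2 b1 b2 c) (f : X.S.T3 a1 a2 a3 b2),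
    Ft4 (X.S.tt23_2 g f) = Y.S.tt23_2 (Ft2 g) (Ft3 f)
  comm_s20_1 : ∀ {b1 b2 c : X.C} (g : X.S.T2 b1 b2 c) (u : X.S.L0 b1),
    Fl1 (X.S.s20_1 g u) = Y.S.s20_1 (Ft2 g) (Fl0 u)
  comm_s20_2 : ∀ {b1 b2 c : X.C} (g : X.S.T2 b1 b2 c) (u : X.S.L0 b2),
    F.map (X.S.s20_2 g u) = Y.S.s20_2 (Ft2 g) (Fl0 u)
  comm_s30_1 : ∀ {b1 b2 b3 c : X.C} (g : X.S.T3 b1 b2 b3 c) (u : X.S.L0 b1),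
    Fl2 (X.S.s30_1 g u) = Y.S.s30_1 (Ft3 g) (Fl0 u)
  comm_s30_2 : ∀ {b1 b2 b3 c : X.C} (g : X.S.T3 b1 b2 b3 c) (u : X.S.L0 b2),
    Ft2 (X.S.s30_2 g u) = Y.S.s30_2 (Ft3 g) (Fl0 u)
  comm_s30_3 : ∀ {b1 b2 b3 c : X.C} (g : X.S.T3 b1 b2 b3 c) (u : X.S.L0 b3),
    Ft2 (X.S.s30_3 g u) = Y.S.s30_3 (Ft3 g) (Fl0 u)
  comm_sL10 : ∀ {b c : X.C} (q : X.S.L1 b c) (v : X.S.L0 b),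
    Fl0 (X.S.sL10 q v) = Y.S.sL10 (Fl1 q) (Fl0 v)
  comm_sl21_1 : ∀ {b1 b2 c a : X.C} (g : X.S.T2 b1 b2 c) (p : X.S.L1 a b1),
    Fl2 (X.S.sl21_1 g p) = Y.S.sl21_1 (Ft2 g) (Fl1 p)
  comm_sl21_2 : ∀ {b1 b2 c a : X.C} (g : X.S.T2 b1 b2 c) (p : X.S.L1 a b2),
    Ft2 (X.S.sl21_2 g p) = Y.S.sl21_2 (Ft2 g) (Fl1 p)
  comm_sl12 : ∀ {b c a1 a2 : X.C} (q : X.S.L1 b c) (g : X.S.T2 a1 a2 b),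
    Fl2 (X.S.sl12 q g) = Y.S.sl12 (Fl1 q) (Ft2 g)

/-- The category of short skew multicategories and their morphisms. -/
instance : Category.{max u v} ShortSkewMulticat.{u, v} where
  Hom := ShortSkewMultiHom
  id X :=
    { F := Functor.id X.C
      Ft2 := fun x => x, Ft3 := fun x => x, Ft4 := fun x => x
      Fl0 := fun x => x, Fl1 := fun x => x, Fl2 := fun x => x
      Ft2_nat := fun _ _ _ _ => rfl, Ft3_nat := fun _ _ _ _ _ => rfl
      Ft4_nat := fun _ _ _ _ _ _ => rfl, Fl0_nat := fun _ _ => rfl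
      Fl1_nat := fun _ _ _ => rfl, Fl2_nat := fun _ _ _ _ => rfl
      comm_j1 := fun _ => rfl, comm_j2 := fun _ => rfl
      comm_tt22_1 := fun _ _ => rfl, comm_tt22_2 := fun _ _ => rfl
      comm_tt32_1 := fun _ _ => rfl, comm_tt32_2 := fun _ _ => rfl
      comm_tt32_3 := fun _ _ => rfl, comm_tt23_1 := fun _ _ => rfl
      comm_tt23_2 := fun _ _ => rfl, comm_s20_1 := fun _ _ => rfl
      comm_s20_2 := fun _ _ => rfl, comm_s30_1 := fun _ _ => rfl
      comm_s30_2 := fun _ _ => rfl, comm_s30_3 := fun _ _ => rfl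
      comm_sL10 := fun _ _ => rfl, comm_sl21_1 := fun _ _ => rfl
      comm_sl21_2 := fun _ _ => rfl, comm_sl12 := fun _ _ => rfl }
  comp {X Y Z} f g :=
    { F := f.F ⋙ g.F
      Ft2 := fun x => g.Ft2 (f.Ft2 x), Ft3 := fun x => g.Ft3 (f.Ft3 x)
      Ft4 := fun x => g.Ft4 (f.Ft4 x), Fl0 := fun x => g.Fl0 (f.Fl0 x)
      Fl1 := fun x => g.Fl1 (f.Fl1 x), Fl2 := fun x => g.Fl2 (f.Fl2 x)
      Ft2_nat := by intros; (try dsimp only); rw [f.Ft2_nat, g.Ft2_nat]; rfl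
      Ft3_nat := by intros; (try dsimp only); rw [f.Ft3_nat, g.Ft3_nat]; rfl
      Ft4_nat := by intros; (try dsimp only); rw [f.Ft4_nat, g.Ft4_nat]; rfl
      Fl0_nat := by intros; (try dsimp only); rw [f.Fl0_nat, g.Fl0_nat]; rfl
      Fl1_nat := by intros; (try dsimp only); rw [f.Fl1_nat, g.Fl1_nat]; rfl
      Fl2_nat := by intros; (try dsimp only); rw [f.Fl2_nat, g.Fl2_nat]; rfl
      comm_j1 := by intros; (try dsimp only); rw [f.comm_j1, g.comm_j1]; rfl
      comm_j2 := by intros; (try dsimp only); rw [f.comm_j2, g.comm_j2]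
      comm_tt22_1 := by intros; (try dsimp only); rw [f.comm_tt22_1, g.comm_tt22_1]
      comm_tt22_2 := by intros; (try dsimp only); rw [f.comm_tt22_2, g.comm_tt22_2]
      comm_tt32_1 := by intros; (try dsimp only); rw [f.comm_tt32_1, g.comm_tt32_1]
      comm_tt32_2 := by intros; (try dsimp only); rw [f.comm_tt32_2, g.comm_tt32_2]
      comm_tt32_3 := by intros; (try dsimp only); rw [f.comm_tt32_3, g.comm_tt32_3]
      comm_tt23_1 := by intros; (try dsimp only); rw [f.comm_tt23_1, g.comm_tt23_1]
      comm_tt23_2 := by intros; (try dsimp only); rw [f.comm_tt23_2, g.comm_tt23_2]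
      comm_s20_1 := by intros; (try dsimp only); rw [f.comm_s20_1, g.comm_s20_1]
      comm_s20_2 := by
        intros; show g.F.map (f.F.map _) = _; rw [f.comm_s20_2, g.comm_s20_2]
      comm_s30_1 := by intros; (try dsimp only); rw [f.comm_s30_1, g.comm_s30_1]
      comm_s30_2 := by intros; (try dsimp only); rw [f.comm_s30_2, g.comm_s30_2]
      comm_s30_3 := by intros; (try dsimp only); rw [f.comm_s30_3, g.comm_s30_3]
      comm_sL10 := by intros; (try dsimp only); rw [f.comm_sL10, g.comm_sL10]
      comm_sl21_1 := by intros; (try dsimp only); rw [f.comm_sl21_1, g.comm_sl21_1]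
      comm_sl21_2 := by intros; (try dsimp only); rw [f.comm_sl21_2, g.comm_sl21_2]
      comm_sl12 := by intros; (try dsimp only); rw [f.comm_sl12, g.comm_sl12] }
  id_comp _ := rfl
  comp_id _ := rfl
  assoc _ _ _ := rfl

/-- The identity morphism of a short skew multicategory, as a standalone
definition. -/
def ShortSkewMultiHom.id' (X : ShortSkewMulticat.{u, v}) : ShortSkewMultiHom X X :=
  𝟙 X

/-- Composition of morphisms of short skew multicategories, as a standalone
definition. -/
def ShortSkewMultiHom.comp' {X Y Z : ShortSkewMulticat.{u, v}}
    (f : ShortSkewMultiHom X Y) (g : ShortSkewMultiHom Y Z) : ShortSkewMultiHom X Z :=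
  CategoryStruct.comp (X := X) (Y := Y) (Z := Z) f g
/-- A *short braiding* on a short skew multicategory: natural isomorphisms
`β³₂` (exchanging the last two inputs of tight ternary maps), `β⁴₂` (exchanging
the 2nd and 3rd inputs of tight 4-ary maps) and `β⁴₃` (exchanging the last two
inputs of tight 4-ary maps), subject to the braid relation
`β⁴₂β⁴₃β⁴₂ = β⁴₃β⁴₂β⁴₃` and the six compatibility axioms with substitution. -/
structure ShortBraiding {C : Type u} [Category.{v} C] (S : ShortSkewMultiStruct C) :
    Type (max u v) where
  b3 : ∀ {a1 a2 a3 b : C}, S.T3 a1 a2 a3 b → S.T3 a1 a3 a2 b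
  b42 : ∀ {a1 a2 a3 a4 b : C}, S.T4 a1 a2 a3 a4 b → S.T4 a1 a3 a2 a4 b
  b43 : ∀ {a1 a2 a3 a4 b : C}, S.T4 a1 a2 a3 a4 b → S.T4 a1 a2 a4 a3 b
  b3_bij : ∀ a1 a2 a3 b : C, Function.Bijective (fun x : S.T3 a1 a2 a3 b => b3 x)
  b42_bij : ∀ a1 a2 a3 a4 b : C, Function.Bijective (fun x : S.T4 a1 a2 a3 a4 b => b42 x)
  b43_bij : ∀ a1 a2 a3 a4 b : C, Function.Bijective (fun x : S.T4 a1 a2 a3 a4 b => b43 x)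
  b3_nat : ∀ {a1' a1 a2' a2 a3' a3 b b' : C} (p1 : a1' ⟶ a1) (p2 : a2' ⟶ a2)
    (p3 : a3' ⟶ a3) (q : b ⟶ b') (x : S.T3 a1 a2 a3 b),
    b3 (S.mapT3 p1 p2 p3 q x) = S.mapT3 p1 p3 p2 q (b3 x)
  b42_nat : ∀ {a1' a1 a2' a2 a3' a3 a4' a4 b b' : C} (p1 : a1' ⟶ a1) (p2 : a2' ⟶ a2)
    (p3 : a3' ⟶ a3) (p4 : a4' ⟶ a4) (q : b ⟶ b') (x : S.T4 a1 a2 a3 a4 b),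
    b42 (S.mapT4 p1 p2 p3 p4 q x) = S.mapT4 p1 p3 p2 p4 q (b42 x)
  b43_nat : ∀ {a1' a1 a2' a2 a3' a3 a4' a4 b b' : C} (p1 : a1' ⟶ a1) (p2 : a2' ⟶ a2)
    (p3 : a3' ⟶ a3) (p4 : a4' ⟶ a4) (q : b ⟶ b') (x : S.T4 a1 a2 a3 a4 b),
    b43 (S.mapT4 p1 p2 p3 p4 q x) = S.mapT4 p1 p2 p4 p3 q (b43 x)
  braid_rel : ∀ {a1 a2 a3 a4 b : C} (h : S.T4 a1 a2 a3 a4 b),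
    b42 (b43 (b42 h)) = b43 (b42 (b43 h))
  comp_bin_1 : ∀ {b1 b2 c a1 a2 a3 : C} (g : S.T2 b1 b2 c) (f : S.T3 a1 a2 a3 b1),
    S.tt23_1 g (b3 f) = b42 (S.tt23_1 g f)
  comp_bin_2 : ∀ {b1 b2 c a1 a2 a3 : C} (g : S.T2 b1 b2 c) (f : S.T3 a1 a2 a3 b2),
    S.tt23_2 g (b3 f) = b43 (S.tt23_2 g f)
  comp_ter_1 : ∀ {b1 b2 b3' c a1 a2 : C} (g : S.T3 b1 b2 b3' c) (f : S.T2 a1 a2 b1),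
    b43 (S.tt32_1 g f) = S.tt32_1 (b3 g) f
  comp_ter_2 : ∀ {b1 b2 b3' c a1 a2 : C} (g : S.T3 b1 b2 b3' c) (f : S.T2 a1 a2 b2),
    b42 (b43 (S.tt32_2 g f)) = S.tt32_3 (b3 g) f
  comp_ter_3 : ∀ {b1 b2 b3' c a1 a2 : C} (g : S.T3 b1 b2 b3' c) (f : S.T2 a1 a2 b3'),
    b43 (b42 (S.tt32_3 g f)) = S.tt32_2 (b3 g) f

namespace ShortBraiding

variable {C : Type u} [Category.{v} C] {S : ShortSkewMultiStruct C}

/-- A short braiding is a *short symmetry* when `β³₂ ∘ β³₂ = id`. -/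
def IsSymmetry (β : ShortBraiding S) : Prop :=
  ∀ {a1 a2 a3 b : C} (x : S.T3 a1 a2 a3 b), β.b3 (β.b3 x) = x

end ShortBraiding

/-- A braided short skew multicategory. -/
structure BrdShortSkewMulticat : Type (max (u + 1) (v + 1)) where
  X : ShortSkewMulticat.{u, v}
  β : ShortBraiding X.S

/-- A morphism of short skew multicategories is *braided* when it commutes with
the braiding isomorphisms `β³₂`, `β⁴₂` and `β⁴₃`. -/
def IsBraidedHom {X Y : ShortSkewMulticat.{u, v}} (βX : ShortBraiding X.S)
    (βY : ShortBraiding Y.S) (F : ShortSkewMultiHom X Y) : Prop :=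
  (∀ {a1 a2 a3 b : X.C} (x : X.S.T3 a1 a2 a3 b), F.Ft3 (βX.b3 x) = βY.b3 (F.Ft3 x)) ∧
  (∀ {a1 a2 a3 a4 b : X.C} (x : X.S.T4 a1 a2 a3 a4 b),
    F.Ft4 (βX.b42 x) = βY.b42 (F.Ft4 x)) ∧
  (∀ {a1 a2 a3 a4 b : X.C} (x : X.S.T4 a1 a2 a3 a4 b),
    F.Ft4 (βX.b43 x) = βY.b43 (F.Ft4 x))

theorem IsBraidedHom.id (X : ShortSkewMulticat.{u, v}) (β : ShortBraiding X.S) :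
    IsBraidedHom β β (𝟙 X) :=
  ⟨fun _ => rfl, fun _ => rfl, fun _ => rfl⟩

theorem IsBraidedHom.comp {X Y Z : ShortSkewMulticat.{u, v}} {βX : ShortBraiding X.S}
    {βY : ShortBraiding Y.S} {βZ : ShortBraiding Z.S} {F : X ⟶ Y} {G : Y ⟶ Z}
    (hF : IsBraidedHom βX βY F) (hG : IsBraidedHom βY βZ G) :
    IsBraidedHom βX βZ (F ≫ G) := by
  refine ⟨fun x => ?_, fun x => ?_, fun x => ?_⟩
  · show G.Ft3 (F.Ft3 (βX.b3 x)) = βZ.b3 (G.Ft3 (F.Ft3 x))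
    rw [hF.1, hG.1]
  · show G.Ft4 (F.Ft4 (βX.b42 x)) = βZ.b42 (G.Ft4 (F.Ft4 x))
    rw [hF.2.1, hG.2.1]
  · show G.Ft4 (F.Ft4 (βX.b43 x)) = βZ.b43 (G.Ft4 (F.Ft4 x))
    rw [hF.2.2, hG.2.2]

/-- The category of braided short skew multicategories and braided morphisms. -/
instance : Category.{max u v} BrdShortSkewMulticat.{u, v} where
  Hom X Y := { F : ShortSkewMultiHom X.X Y.X // IsBraidedHom X.β Y.β F }
  id X := Subtype.mk (ShortSkewMultiHom.id' X.X) (IsBraidedHom.id X.X X.β)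
  comp {X Y Z} f g :=
    Subtype.mk (ShortSkewMultiHom.comp' f.1 g.1) (IsBraidedHom.comp f.2 g.2)
  id_comp {X Y} f := by
    apply Subtype.ext
    show ShortSkewMultiHom.comp' (ShortSkewMultiHom.id' X.X) f.1 = f.1
    show 𝟙 X.X ≫ f.1 = f.1
    simp
  comp_id {X Y} f := by
    apply Subtype.ext
    show ShortSkewMultiHom.comp' f.1 (ShortSkewMultiHom.id' Y.X) = f.1
    show f.1 ≫ 𝟙 Y.X = f.1
    simp
  assoc {W X Y Z} f g h := by
    apply Subtype.ext
    show ShortSkewMultiHom.comp' (ShortSkewMultiHom.comp' f.1 g.1) h.1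
      = ShortSkewMultiHom.comp' f.1 (ShortSkewMultiHom.comp' g.1 h.1)
    rfl

/-!
Every tight 4-ary map of a left representable short skew multicategory factors through
left universal binary classifiers, both as `G ∘₁ θ` with `G` tight ternary and as
`g ∘₁ (θ' ∘₁ θ)` with `g` tight binary. In the first form `β⁴₃` becomes `β³₂ G ∘₁ θ`,
in the second `β⁴₂` becomes `g ∘₁ β³₂ (θ' ∘₁ θ)`; since `F` preserves substitution and
commutes with `β³₂`, it commutes with `β⁴₃` and `β⁴₂` on maps of these shapes, hence on all.
-/

namespace ShortSkewMultiStruct.LeftRepresentable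

variable {C : Type u} [Category.{v} C] {S : ShortSkewMultiStruct C}

theorem exists_tt32_1_eq (hS : S.LeftRepresentable) {a1 a2 a3 a4 b : C}
    (x : S.T4 a1 a2 a3 a4 b) :
    ∃ (t : C) (θ : S.T2 a1 a2 t) (G : S.T3 t a3 a4 b), S.tt32_1 G θ = x := by
  obtain ⟨t, θ, hθ⟩ := hS.1 a1 a2
  obtain ⟨G, hG⟩ := (hθ.2.2 a3 a4 b).2 x
  exact ⟨t, θ, G, hG⟩

theorem exists_tt23_1_tt22_1_eq (hS : S.LeftRepresentable) {a1 a2 a3 a4 b : C}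
    (x : S.T4 a1 a2 a3 a4 b) :
    ∃ (t s : C) (θ : S.T2 a1 a2 t) (θ' : S.T2 t a3 s) (g : S.T2 s a4 b),
      S.tt23_1 g (S.tt22_1 θ' θ) = x := by
  obtain ⟨t, θ, G, rfl⟩ := hS.exists_tt32_1_eq x
  obtain ⟨s, θ', hθ'⟩ := hS.1 t a3
  obtain ⟨g, rfl⟩ := (hθ'.2.1 a4 b).2 G
  exact ⟨t, s, θ, θ', g, S.assoc_a_11 g θ' θ⟩

end ShortSkewMultiStruct.LeftRepresentable

namespace ShortSkewMultiHom

variable {X Y : ShortSkewMulticat.{u, v}} {βX : ShortBraiding X.S} {βY : ShortBraiding Y.S}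
  (F : ShortSkewMultiHom X Y)

theorem map_b43_tt32_1
    (h3 : ∀ {a1 a2 a3 b : X.C} (x : X.S.T3 a1 a2 a3 b), F.Ft3 (βX.b3 x) = βY.b3 (F.Ft3 x))
    {t a1 a2 a3 a4 b : X.C} (G : X.S.T3 t a3 a4 b) (θ : X.S.T2 a1 a2 t) :
    F.Ft4 (βX.b43 (X.S.tt32_1 G θ)) = βY.b43 (F.Ft4 (X.S.tt32_1 G θ)) := by
  rw [βX.comp_ter_1, F.comm_tt32_1, F.comm_tt32_1, h3, βY.comp_ter_1]

theorem map_b42_tt23_1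
    (h3 : ∀ {a1 a2 a3 b : X.C} (x : X.S.T3 a1 a2 a3 b), F.Ft3 (βX.b3 x) = βY.b3 (F.Ft3 x))
    {s a1 a2 a3 a4 b : X.C} (g : X.S.T2 s a4 b) (f : X.S.T3 a1 a2 a3 s) :
    F.Ft4 (βX.b42 (X.S.tt23_1 g f)) = βY.b42 (F.Ft4 (X.S.tt23_1 g f)) := by
  rw [← βX.comp_bin_1, F.comm_tt23_1, F.comm_tt23_1, h3, βY.comp_bin_1]

end ShortSkewMultiHom

theorem stmt_18_general (X Y : ShortSkewMulticat.{u, v}) (βX : ShortBraiding X.S)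
    (βY : ShortBraiding Y.S) (hX : X.S.LeftRepresentable)
    (F : ShortSkewMultiHom X Y)
    (h3 : ∀ {a1 a2 a3 b : X.C} (x : X.S.T3 a1 a2 a3 b),
      F.Ft3 (βX.b3 x) = βY.b3 (F.Ft3 x)) :
    (∀ {a1 a2 a3 a4 b : X.C} (x : X.S.T4 a1 a2 a3 a4 b),
      F.Ft4 (βX.b42 x) = βY.b42 (F.Ft4 x)) ∧
    (∀ {a1 a2 a3 a4 b : X.C} (x : X.S.T4 a1 a2 a3 a4 b),
      F.Ft4 (βX.b43 x) = βY.b43 (F.Ft4 x)) := by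
  constructor
  · intro a1 a2 a3 a4 b x
    obtain ⟨t, s, θ, θ', g, rfl⟩ := hX.exists_tt23_1_tt22_1_eq x
    exact F.map_b42_tt23_1 h3 g (X.S.tt22_1 θ' θ)
  · intro a1 a2 a3 a4 b x
    obtain ⟨t, θ, G, rfl⟩ := hX.exists_tt32_1_eq x
    exact F.map_b43_tt32_1 h3 G θ

/-- **Statement 18** (Lemma 5.26 of Bourke–Lobbia, "A Skew Approach to
Representability"). Let `𝔠` and `𝔡` be braided left representable short skew
multicategories and `F : 𝔠 → 𝔡` a morphism of short skew multicategories. If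
`F` commutes with `β³₂` then it also commutes with `β⁴₂` and `β⁴₃`. -/
theorem stmt_18 (X Y : ShortSkewMulticat.{u, v}) (βX : ShortBraiding X.S)
    (βY : ShortBraiding Y.S) (hX : X.S.LeftRepresentable) (hY : Y.S.LeftRepresentable)
    (F : ShortSkewMultiHom X Y)
    (h3 : ∀ {a1 a2 a3 b : X.C} (x : X.S.T3 a1 a2 a3 b),
      F.Ft3 (βX.b3 x) = βY.b3 (F.Ft3 x)) :
    (∀ {a1 a2 a3 a4 b : X.C} (x : X.S.T4 a1 a2 a3 a4 b),
      F.Ft4 (βX.b42 x) = βY.b42 (F.Ft4 x)) ∧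
    (∀ {a1 a2 a3 a4 b : X.C} (x : X.S.T4 a1 a2 a3 a4 b),
      F.Ft4 (βX.b43 x) = βY.b43 (F.Ft4 x)) :=
  stmt_18_general X Y βX βY hX F h3
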